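/- arXiv:2509.24015 — 3 statements merged into one kernel-verified Lean document; each statement's English description precedes it below -/
import Mathlib

section
/- Let v ≥ 3 be odd and k ≥ 3, and let C = (0, c_2, …, c_k) be a k-cycle on ZMod v of type 1 whose list of differences ΔC = {±(c_{i+1}−c_i) : indices mod k} consists of 2k pairwise distinct elements of ZMod v. Then the k-cycle −C := (0, −c_2, …, −c_k) is not a translate of C, i.e., there is no t ∈ ZMod v with −C + t = C as cycles. -/
namespace CCS

/-- A block: a set of edges of the complete graph on `ZMod v`. -/
abbrev Block (v : ℕ) := Finset (Sym2 (ZMod v))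

/-- The edge set of the closed tuple `c = (c 0, c 1, …, c (k-1))`. -/
def edgesOf {v k : ℕ} (c : Fin k → ZMod v) : Block v :=
  Finset.image (fun i : Fin k => s(c i, c ⟨(i.1 + 1) % k, Nat.mod_lt _ i.pos⟩)) Finset.univ

/-- `E` is the edge set of a `k`-cycle on `ZMod v`. Since for `k ≥ 3` the edge set
determines the closed tuple up to rotation and reversal, a `k`-cycle is identified
with its edge set. -/
def IsCycleBlock (v k : ℕ) (E : Block v) : Prop :=
  ∃ c : Fin k → ZMod v, Function.Injective c ∧ E = edgesOf c

/-- The translate `E + z` of a cycle. -/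
def translateBlock {v : ℕ} (E : Block v) (z : ZMod v) : Block v :=
  E.image (Sym2.map (· + z))

/-- A `(K_v, C_k)`-design: a set of `k`-cycles whose edge sets partition the edges of `K_v`. -/
def IsDesign (v k : ℕ) (B : Set (Block v)) : Prop :=
  (∀ E ∈ B, IsCycleBlock v k E) ∧
  ∀ e : Sym2 (ZMod v), ¬ e.IsDiag → ∃! E, E ∈ B ∧ e ∈ E

/-- A cyclic `(K_v, C_k)`-design. -/
def IsCyclicDesign (v k : ℕ) (B : Set (Block v)) : Prop :=
  IsDesign v k B ∧ ∀ E ∈ B, ∀ z : ZMod v, translateBlock E z ∈ B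

/-- Two designs are isomorphic if a bijection of `ZMod v` maps one onto the other. -/
def Isomorphic {v : ℕ} (B B' : Set (Block v)) : Prop :=
  ∃ f : ZMod v ≃ ZMod v, B' = (fun E : Block v => E.image (Sym2.map f)) '' B

/-- `NC v k`: the number of cyclic `(K_v, C_k)`-designs up to isomorphism. -/
noncomputable def NC (v k : ℕ) : ℕ :=
  Nat.card (Quot fun B B' : {B : Set (Block v) // IsCyclicDesign v k B} =>
    Isomorphic B.1 B'.1)

/-- The type of a cycle: the order of its stabilizer under translations. -/
noncomputable def cycleType {v : ℕ} (E : Block v) : ℕ :=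
  Nat.card {z : ZMod v // translateBlock E z = E}

/-- The two differences `±(a-b)` arising from an edge `{a,b}`. -/
def edgeDiffs {v : ℕ} : Sym2 (ZMod v) → Multiset (ZMod v) :=
  Sym2.lift ⟨fun a b => {a - b, b - a}, fun a b => by
    show (a-b) ::ₘ {b-a} = (b-a) ::ₘ {a-b}; exact Multiset.cons_swap _ _ _⟩

/-- The multiset of the `2k` differences arising from the `k` edges of a cycle.
For a cycle of type `d` this is `d` copies of the list `∂C` of partial differences. -/
def fullDiffs {v : ℕ} (E : Block v) : Multiset (ZMod v) :=
  E.val.bind edgeDiffs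

/-- The multiset `∂C` of partial differences of a cycle: each difference is counted
with multiplicity equal to its multiplicity among the `2k` edge differences divided
by the type of the cycle. -/
noncomputable def partialDiffs {v : ℕ} (E : Block v) : Multiset (ZMod v) :=
  (fullDiffs E).toFinset.val.bind fun x =>
    Multiset.replicate ((fullDiffs E).count x / cycleType E) x

/-- A `(K_v, C_k)`-difference system: a set of `k`-cycles whose partial differences
cover every nonzero element of `ZMod v` exactly once. -/
def IsDifferenceSystem (v k : ℕ) (F : Finset (Block v)) : Prop :=
  (∀ E ∈ F, IsCycleBlock v k E) ∧
  ∀ x : ZMod v, (F.val.bind partialDiffs).count x = if x = 0 then 0 else 1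


variable {v : ℕ}

@[simp]
lemma edgeDiffs_mk (a b : ZMod v) : edgeDiffs s(a, b) = {a - b, b - a} := rfl

lemma sub_ne_sub_of_mem {E : Block v} (hE : (fullDiffs E).Nodup) {a b : ZMod v}
    (hab : s(a, b) ∈ E) : a - b ≠ b - a := by
  have hnodup := (Multiset.nodup_bind.mp hE).1 _ hab
  simpa using hnodup

lemma eq_of_mem_edgeDiffs {E : Block v} (hE : (fullDiffs E).Nodup) {e e' : Sym2 (ZMod v)}
    (he : e ∈ E) (he' : e' ∈ E) {x : ZMod v} (hx : x ∈ edgeDiffs e) (hx' : x ∈ edgeDiffs e') :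
    e = e' := by
  by_contra hne
  have hdisj := (Multiset.nodup_bind.mp hE).2.forall he he' hne
  exact Multiset.disjoint_left.mp hdisj hx hx'

lemma mk_mem_edgesOf {k : ℕ} (c : Fin k → ZMod v) (i : ℕ) (hi : i + 1 < k) :
    s(c ⟨i, by omega⟩, c ⟨i + 1, hi⟩) ∈ edgesOf c := by
  refine Finset.mem_image.mpr ⟨⟨i, by omega⟩, Finset.mem_univ _, ?_⟩
  simp [Nat.mod_eq_of_lt hi]

lemma neg_add_mem_translateBlock {k : ℕ} {c : Fin k → ZMod v} {a b : ZMod v}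
    (hab : s(a, b) ∈ edgesOf c) (t : ZMod v) :
    s(-a + t, -b + t) ∈ translateBlock (edgesOf fun i => -(c i)) t := by
  obtain ⟨i, -, hi⟩ := Finset.mem_image.mp hab
  refine Finset.mem_image.mpr ⟨s(-a, -b), Finset.mem_image.mpr ⟨i, Finset.mem_univ _, ?_⟩, rfl⟩
  rw [Sym2.eq_iff] at hi ⊢
  rcases hi with ⟨rfl, rfl⟩ | ⟨rfl, rfl⟩ <;> simp

/-- The reflection `x ↦ t - x` preserves the difference of an edge up to sign, so when all
differences are distinct it must fix every edge; since it cannot fix both endpoints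
(that would give `a - b = b - a`), it swaps them. -/
lemma add_eq_of_translateBlock_neg_eq {k : ℕ} {c : Fin k → ZMod v} {t : ZMod v}
    (h : translateBlock (edgesOf fun i => -(c i)) t = edgesOf c)
    (hdiff : (fullDiffs (edgesOf c)).Nodup) {a b : ZMod v} (hab : s(a, b) ∈ edgesOf c) :
    t = a + b := by
  have hmem : s(-a + t, -b + t) ∈ edgesOf c := h ▸ neg_add_mem_translateBlock hab t
  have hfix : s(-a + t, -b + t) = s(a, b) :=
    eq_of_mem_edgeDiffs hdiff hmem hab (x := a - b)
      (by rw [edgeDiffs_mk, show -b + t - (-a + t) = a - b by abel]; simp) (by simp)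
  rcases Sym2.eq_iff.mp hfix with ⟨ha, hb⟩ | ⟨ha, _⟩
  · exact absurd (by linear_combination hb - ha) (sub_ne_sub_of_mem hdiff hab)
  · linear_combination ha

end CCS

/-- Let `C = (0, c_2, …, c_k)` be a `k`-cycle of type 1 whose list of
differences `ΔC` consists of `2k` pairwise distinct elements. Then the cycle
`-C = (0, -c_2, …, -c_k)` is not a translate of `C`. -/
theorem stmt2 (v k : ℕ) (hk : 3 ≤ k)
    (c : Fin k → ZMod v)
    (hcinj : Function.Injective c)
    (hdiff : (CCS.fullDiffs (CCS.edgesOf c)).Nodup) :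
    ∀ t : ZMod v, CCS.translateBlock (CCS.edgesOf fun i => -(c i)) t ≠ CCS.edgesOf c := by
  intro t h
  have h01 := CCS.add_eq_of_translateBlock_neg_eq h hdiff (CCS.mk_mem_edgesOf c 0 (by omega))
  have h12 := CCS.add_eq_of_translateBlock_neg_eq h hdiff (CCS.mk_mem_edgesOf c 1 (by omega))
  have h02 : c ⟨0, by omega⟩ = c ⟨2, by omega⟩ := by linear_combination h12 - h01
  exact absurd (hcinj h02) (by simp)
end

section
/- Let n ≥ 2 and let (s_1, …, s_n) be a split Skolem (Rosa) sequence of order n. In ZMod (6n+3), the set F = {C_1, …, C_n} ∪ {B}, where C_i = (0, i, s_i + i + n) for 1 ≤ i ≤ n and B = (0, 2n+1, 4n+2), is a (K_{6n+3}, C_3)-difference system: the multiset {±i, ±(s_i+n), ±(s_i+i+n) : 1 ≤ i ≤ n} ∪ {±(2n+1)} covers every nonzero element of ZMod (6n+3) exactly once. Moreover each C_i is of type 1 and B is of type 3. -/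
/-- A split Skolem (Rosa) sequence of order `n`: positive integers `s_1, …, s_n` with
`⋃_{i=1}^n {s_i, s_i + i} = {1, …, 2n+2} \ {n+1, m}`, where `m = 2n+2` if
`n ≡ 0, 3 (mod 4)` and `m = 2n+1` (split-hooked) if `n ≡ 1, 2 (mod 4)`. -/
def IsSplitSkolem (n : ℕ) (s : ℕ → ℕ) : Prop :=
  (∀ i ∈ Finset.Icc 1 n, 1 ≤ s i) ∧
  (Finset.Icc 1 n).biUnion (fun i => {s i, s i + i}) =
    (Finset.Icc 1 (2 * n + 2)) \
      {n + 1, if n % 4 = 0 ∨ n % 4 = 3 then 2 * n + 2 else 2 * n + 1}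

/-- The `3`-cycle `C_i = (0, i, s_i + i + n)` on `ZMod (6n+3)`. -/
noncomputable def rosaCycle (n : ℕ) (s : ℕ → ℕ) (i : ℕ) : CCS.Block (6 * n + 3) :=
  CCS.edgesOf ![(0 : ZMod (6 * n + 3)), (i : ZMod (6 * n + 3)),
    ((s i + i + n : ℕ) : ZMod (6 * n + 3))]

/-- The `3`-cycle `B = (0, 2n+1, 4n+2)` on `ZMod (6n+3)`. -/
noncomputable def rosaShortCycle (n : ℕ) : CCS.Block (6 * n + 3) :=
  CCS.edgesOf ![(0 : ZMod (6 * n + 3)), ((2 * n + 1 : ℕ) : ZMod (6 * n + 3)),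
    ((4 * n + 2 : ℕ) : ZMod (6 * n + 3))]

namespace CCS

variable {v : ℕ}

lemma edgesOf_three (a b c : ZMod v) :
    edgesOf ![a, b, c] = {s(a, b), s(b, c), s(c, a)} := by
  ext e
  simp only [edgesOf, Finset.mem_image, Finset.mem_univ, true_and, Finset.mem_insert,
    Finset.mem_singleton]
  constructor
  · rintro ⟨i, rfl⟩
    fin_cases i <;> simp
  · rintro (rfl | rfl | rfl)
    exacts [⟨0, by simp⟩, ⟨1, by simp⟩, ⟨2, by simp⟩]

lemma edgesOf_three_rotate (a b c : ZMod v) : edgesOf ![b, c, a] = edgesOf ![a, b, c] := by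
  ext e
  simp only [edgesOf_three, Finset.mem_insert, Finset.mem_singleton]
  tauto

lemma isCycleBlock_edgesOf_three {a b c : ZMod v} (hab : a ≠ b) (hbc : b ≠ c) (hca : c ≠ a) :
    IsCycleBlock v 3 (edgesOf ![a, b, c]) := by
  refine ⟨_, fun x y hxy => ?_, rfl⟩
  fin_cases x <;> fin_cases y <;> simp_all [eq_comm]

lemma translateBlock_zero (E : Block v) : translateBlock E 0 = E := by
  simp [translateBlock]

lemma translateBlock_edgesOf_three (a b c z : ZMod v) :
    translateBlock (edgesOf ![a, b, c]) z = edgesOf ![a + z, b + z, c + z] := by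
  simp [edgesOf_three, translateBlock, Finset.image_insert]

lemma cycleType_eq_card {E : Block v} (S : Finset (ZMod v))
    (h : ∀ z, translateBlock E z = E ↔ z ∈ S) : cycleType E = S.card := by
  unfold cycleType
  simp_rw [h]
  exact Nat.card_eq_finsetCard S

lemma partialDiffs_eq_of_fullDiffs_eq_nsmul {E : Block v} {M : Multiset (ZMod v)}
    (h0 : cycleType E ≠ 0) (h : fullDiffs E = cycleType E • M) : partialDiffs E = M := by
  unfold partialDiffs
  rw [h, Multiset.toFinset_nsmul _ _ h0]
  simp_rw [Multiset.count_nsmul, Nat.mul_div_cancel_left _ (Nat.pos_of_ne_zero h0),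
    ← Multiset.nsmul_singleton]
  exact Multiset.toFinset_sum_count_nsmul_eq M

lemma edgeDiffs_map_add (e : Sym2 (ZMod v)) (z : ZMod v) :
    edgeDiffs (Sym2.map (· + z) e) = edgeDiffs e := by
  induction e using Sym2.ind with
  | h a b => simp [edgeDiffs]

/- A translation preserves the differences of each edge; distinct edges have disjoint differences,
so it fixes every edge, and a nonzero translation could fix `{a, b}` only by swapping its ends,
which forces `a - b = b - a`. -/
lemma eq_zero_of_translateBlock_eq_of_nodup {E : Block v} (hE : E.Nonempty)
    (hnd : (fullDiffs E).Nodup) {z : ZMod v} (hz : translateBlock E z = E) : z = 0 := by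
  obtain ⟨e, he⟩ := hE
  have he' : Sym2.map (· + z) e ∈ E := hz ▸ Finset.mem_image_of_mem _ he
  have hpair := (Multiset.nodup_bind.1 hnd).2.forall he he'
  induction e using Sym2.ind with
  | h a b =>
    by_cases hfix : Sym2.map (· + z) s(a, b) = s(a, b)
    · have hab : a - b ≠ b - a := by
        simpa [edgeDiffs] using (Multiset.nodup_bind.1 hnd).1 _ he
      rw [Sym2.map_mk, Sym2.eq_iff] at hfix
      rcases hfix with ⟨h, -⟩ | ⟨h₁, h₂⟩
      · simpa using h
      · exact absurd ((by rw [← h₂]; ring : a - b = z).trans (by rw [← h₁]; ring)) hab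
    · have hdisj : Disjoint (edgeDiffs s(a, b)) (edgeDiffs (Sym2.map (· + z) s(a, b))) :=
        hpair (Ne.symm hfix)
      rw [edgeDiffs_map_add, disjoint_self] at hdisj
      simp [edgeDiffs] at hdisj

lemma cycleType_eq_one_of_nodup {E : Block v} (hE : E.Nonempty) (hnd : (fullDiffs E).Nodup) :
    cycleType E = 1 :=
  cycleType_eq_card {0} fun _ => ⟨fun hz => Finset.mem_singleton.2
    (eq_zero_of_translateBlock_eq_of_nodup hE hnd hz),
    fun hz => Finset.mem_singleton.1 hz ▸ translateBlock_zero E⟩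

def triangleDiffs (b c : ZMod v) : Multiset (ZMod v) := {b, -b, c - b, -(c - b), c, -c}

section Triangle

variable {b c : ZMod v}

lemma ne_zero_of_zero_notMem_triangleDiffs (h0 : (0 : ZMod v) ∉ triangleDiffs b c) :
    b ≠ 0 ∧ c ≠ 0 ∧ b ≠ c := by
  simp only [triangleDiffs, Multiset.insert_eq_cons, Multiset.mem_cons, Multiset.mem_singleton,
    not_or] at h0
  refine ⟨Ne.symm h0.1, Ne.symm h0.2.2.2.2.1, fun h => h0.2.2.1 (by rw [h, sub_self])⟩

lemma isCycleBlock_edgesOf_zero (h0 : (0 : ZMod v) ∉ triangleDiffs b c) :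
    IsCycleBlock v 3 (edgesOf ![0, b, c]) := by
  obtain ⟨hb, hc, hbc⟩ := ne_zero_of_zero_notMem_triangleDiffs h0
  exact isCycleBlock_edgesOf_three (Ne.symm hb) hbc hc

lemma fullDiffs_edgesOf_zero (h0 : (0 : ZMod v) ∉ triangleDiffs b c) :
    fullDiffs (edgesOf ![0, b, c]) = triangleDiffs b c := by
  obtain ⟨hb, hc, hbc⟩ := ne_zero_of_zero_notMem_triangleDiffs h0
  rw [fullDiffs, edgesOf_three, Sym2.eq_swap (a := 0) (b := b), Sym2.eq_swap (a := b) (b := c),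
    Finset.insert_val_of_notMem (by simp [hb, hc.symm, hbc]),
    Finset.insert_val_of_notMem (by simp [hb, hc, hbc])]
  simp [edgeDiffs, triangleDiffs, Multiset.cons_swap]

lemma cycleType_edgesOf_zero (h0 : (0 : ZMod v) ∉ triangleDiffs b c)
    (hnd : (triangleDiffs b c).Nodup) :
    cycleType (edgesOf ![0, b, c]) = 1 :=
  cycleType_eq_one_of_nodup ⟨s(0, b), by simp [edgesOf_three]⟩
    (fullDiffs_edgesOf_zero h0 ▸ hnd)

lemma partialDiffs_edgesOf_zero (h0 : (0 : ZMod v) ∉ triangleDiffs b c)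
    (hnd : (triangleDiffs b c).Nodup) :
    partialDiffs (edgesOf ![0, b, c]) = triangleDiffs b c := by
  have htype := cycleType_edgesOf_zero h0 hnd
  exact partialDiffs_eq_of_fullDiffs_eq_nsmul (by rw [htype]; exact one_ne_zero)
    (by rw [htype, one_nsmul, fullDiffs_edgesOf_zero h0])

end Triangle

lemma mem_of_translateBlock_edgesOf_zero_eq {b c z : ZMod v}
    (hz : translateBlock (edgesOf ![0, b, c]) z = edgesOf ![0, b, c]) :
    z = 0 ∨ z = b ∨ z = c := by
  have h : s(0 + z, b + z) ∈ edgesOf ![0, b, c] := by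
    rw [← hz, translateBlock_edgesOf_three, edgesOf_three]
    exact Finset.mem_insert_self _ _
  simp only [zero_add, edgesOf_three, Finset.mem_insert, Finset.mem_singleton, Sym2.eq_iff] at h
  tauto

section Orbit

variable {t : ZMod v}

lemma triangleDiffs_orbit (h3 : t + t + t = 0) : triangleDiffs t (t + t) = 3 • {t, -t} := by
  have hneg : t + t = -t := eq_neg_of_add_eq_zero_left h3
  rw [triangleDiffs, add_sub_cancel_right, hneg, neg_neg]
  ext x
  simp only [Multiset.count_nsmul, Multiset.insert_eq_cons, Multiset.count_cons,
    Multiset.count_singleton]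
  split_ifs <;> omega

lemma zero_notMem_triangleDiffs_orbit (ht : t ≠ 0) (h3 : t + t + t = 0) :
    (0 : ZMod v) ∉ triangleDiffs t (t + t) := by
  simp [triangleDiffs_orbit h3, Multiset.mem_nsmul, ht, Ne.symm ht]

lemma translateBlock_edgesOf_orbit_eq_iff (ht : t ≠ 0) (h3 : t + t + t = 0) (z : ZMod v) :
    translateBlock (edgesOf ![0, t, t + t]) z = edgesOf ![0, t, t + t] ↔
      z ∈ ({0, t, t + t} : Finset (ZMod v)) := by
  refine ⟨fun hz => by simpa using mem_of_translateBlock_edgesOf_zero_eq hz, fun hz => ?_⟩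
  simp only [Finset.mem_insert, Finset.mem_singleton] at hz
  rcases hz with rfl | rfl | rfl
  · exact translateBlock_zero _
  · rw [translateBlock_edgesOf_three, zero_add, h3, edgesOf_three_rotate]
  · rw [translateBlock_edgesOf_three, zero_add, show t + (t + t) = 0 by linear_combination h3,
      show t + t + (t + t) = t by linear_combination h3, edgesOf_three_rotate,
      edgesOf_three_rotate]

lemma cycleType_edgesOf_orbit (ht : t ≠ 0) (h3 : t + t + t = 0) :
    cycleType (edgesOf ![0, t, t + t]) = 3 := by
  have h2 : t + t ≠ 0 := fun h => ht (by linear_combination h3 - h)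
  have htt : t ≠ t + t := fun h => ht (by linear_combination -h)
  rw [cycleType_eq_card _ (translateBlock_edgesOf_orbit_eq_iff ht h3),
    Finset.card_insert_of_notMem (by simp [Ne.symm ht, Ne.symm h2]), Finset.card_pair htt]

lemma partialDiffs_edgesOf_orbit (ht : t ≠ 0) (h3 : t + t + t = 0) :
    partialDiffs (edgesOf ![0, t, t + t]) = {t, -t} := by
  have htype := cycleType_edgesOf_orbit ht h3
  refine partialDiffs_eq_of_fullDiffs_eq_nsmul (by rw [htype]; norm_num) ?_
  rw [htype, fullDiffs_edgesOf_zero (zero_notMem_triangleDiffs_orbit ht h3),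
    triangleDiffs_orbit h3]

end Orbit

end CCS

def splitSkolemGap (n : ℕ) : ℕ := if n % 4 = 0 ∨ n % 4 = 3 then 2 * n + 2 else 2 * n + 1

lemma splitSkolemGap_bounds (n : ℕ) :
    n + 1 < splitSkolemGap n ∧ 2 * n + 1 ≤ splitSkolemGap n ∧
      splitSkolemGap n ≤ 2 * n + 2 := by
  unfold splitSkolemGap
  split_ifs <;> omega

lemma Multiset.count_map_add_right (M : Multiset ℕ) (d y : ℕ) :
    (M.map (· + d)).count y = if d ≤ y then M.count (y - d) else 0 := by
  split_ifs with h
  · obtain ⟨k, rfl⟩ := Nat.exists_eq_add_of_le' h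
    rw [Multiset.count_map_eq_count' _ _ (add_left_injective d), Nat.add_sub_cancel]
  · exact Multiset.count_eq_zero.2 (by simp; omega)

namespace IsSplitSkolem

variable {n : ℕ} {s : ℕ → ℕ}

lemma biUnion_eq (hs : IsSplitSkolem n s) :
    (Finset.Icc 1 n).biUnion (fun i => {s i, s i + i}) =
      Finset.Icc 1 (2 * n + 2) \ {n + 1, splitSkolemGap n} :=
  hs.2

lemma bind_pairs_eq (hs : IsSplitSkolem n s) :
    (Finset.Icc 1 n).val.bind (fun i => {s i, s i + i}) =
      (Finset.Icc 1 (2 * n + 2) \ {n + 1, splitSkolemGap n}).val := by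
  set M : Multiset ℕ := (Finset.Icc 1 n).val.bind (fun i => {s i, s i + i})
  have hset : M.toFinset = Finset.Icc 1 (2 * n + 2) \ {n + 1, splitSkolemGap n} := by
    rw [← hs.biUnion_eq]
    ext y
    simp only [M, Multiset.mem_toFinset, Multiset.mem_bind, Finset.mem_val, Finset.mem_biUnion,
      Multiset.insert_eq_cons, Multiset.mem_cons, Multiset.mem_singleton, Finset.mem_insert,
      Finset.mem_singleton]
  have hcard : Multiset.card M = (Finset.Icc 1 (2 * n + 2) \ {n + 1, splitSkolemGap n}).card := by
    have hgap := splitSkolemGap_bounds n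
    have hsub : {n + 1, splitSkolemGap n} ⊆ Finset.Icc 1 (2 * n + 2) := by
      intro y hy
      simp only [Finset.mem_insert, Finset.mem_singleton] at hy
      simp only [Finset.mem_Icc]
      omega
    rw [Finset.card_sdiff_of_subset hsub, Finset.card_pair hgap.1.ne]
    simp [M]
    omega
  have hnd : M.Nodup := Multiset.toFinset_card_eq_card_iff_nodup.1 (by rw [hset, hcard])
  rw [← hset, Multiset.toFinset_val, hnd.dedup]

lemma bind_baseDiffs_eq (hs : IsSplitSkolem n s) :
    (Finset.Icc 1 n).val.bind (fun i => {i, s i + n, s i + i + n}) + {2 * n + 1} =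
      (Finset.Icc 1 (3 * n + 2) \ {splitSkolemGap n + n}).val := by
  have hsplit : (Finset.Icc 1 n).val.bind (fun i => {i, s i + n, s i + i + n}) =
      (Finset.Icc 1 n).val + ((Finset.Icc 1 n).val.bind fun i => {s i, s i + i}).map (· + n) := by
    rw [Multiset.map_bind]
    calc _ = (Finset.Icc 1 n).val.bind fun i => {i} + Multiset.map (· + n) {s i, s i + i} :=
          Multiset.bind_congr fun i _ => by
            simp only [Multiset.insert_eq_cons, Multiset.map_cons, Multiset.map_singleton,
              Multiset.singleton_add]
      _ = _ := by
          rw [Multiset.bind_add]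
          exact congrArg (· + _)
            ((Multiset.bind_singleton _ fun x => x).trans (Multiset.map_id' _))
  have hgap := splitSkolemGap_bounds n
  rw [hsplit, hs.bind_pairs_eq]
  ext y
  simp only [Multiset.count_add, Multiset.count_map_add_right,
    Multiset.count_eq_of_nodup (Finset.nodup _), Multiset.count_singleton, Finset.mem_val,
    Finset.mem_sdiff, Finset.mem_Icc, Finset.mem_insert, Finset.mem_singleton]
  split_ifs <;> omega

end IsSplitSkolem

lemma Multiset.nodup_of_nodup_bind {α β : Type*} {s : Multiset α} {t : α → Multiset β}
    (h : (s.bind t).Nodup) (ht : ∀ a ∈ s, t a ≠ 0) : s.Nodup := by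
  obtain ⟨l, rfl, hl⟩ := (Multiset.nodup_bind.1 h).2
  rw [Multiset.coe_nodup]
  refine hl.imp_of_mem fun ha _ hdisj hab => ?_
  subst hab
  exact ht _ ha (disjoint_self.1 hdisj)

lemma Multiset.toFinset_val_bind {α β : Type*} [DecidableEq α] {s : Multiset α}
    {t : α → Multiset β} (h : (s.bind t).Nodup) (ht : ∀ a ∈ s, t a ≠ 0) :
    s.toFinset.val.bind t = s.bind t := by
  rw [Multiset.toFinset_val, (Multiset.nodup_of_nodup_bind h ht).dedup]

lemma ZMod.count_map_natCast {v : ℕ} [NeZero v] {S : Finset ℕ} (hS : ∀ y ∈ S, y < v)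
    (x : ZMod v) :
    (S.val.map (Nat.cast : ℕ → ZMod v)).count x = if x.val ∈ S then 1 else 0 := by
  have hnd : (S.val.map (Nat.cast : ℕ → ZMod v)).Nodup :=
    S.nodup.map_on fun a ha b hb hab => by
      rw [← ZMod.val_natCast_of_lt (hS a ha), hab, ZMod.val_natCast_of_lt (hS b hb)]
  rw [Multiset.count_eq_of_nodup hnd]
  congr 1
  simp only [Multiset.mem_map, Finset.mem_val, eq_iff_iff]
  constructor
  · rintro ⟨y, hy, rfl⟩
    rwa [ZMod.val_natCast_of_lt (hS y hy)]
  · exact fun hx => ⟨x.val, hx, ZMod.natCast_zmod_val x⟩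

lemma ZMod.count_bind_natCast_neg {v : ℕ} [NeZero v] {S : Finset ℕ} (hS : ∀ y ∈ S, y < v)
    (x : ZMod v) :
    (S.val.bind fun y => {(y : ZMod v), -(y : ZMod v)}).count x =
      (if x.val ∈ S then 1 else 0) + (if (-x).val ∈ S then 1 else 0) := by
  have hsplit : (S.val.bind fun y => {(y : ZMod v), -(y : ZMod v)}) =
      S.val.map (Nat.cast : ℕ → ZMod v) +
        (S.val.map (Nat.cast : ℕ → ZMod v)).map Neg.neg := by
    rw [Multiset.map_map, ← Multiset.bind_singleton, ← Multiset.bind_singleton,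
      ← Multiset.bind_add]
    rfl
  rw [hsplit, Multiset.count_add, ← neg_neg x,
    Multiset.count_map_eq_count' _ _ neg_injective, neg_neg, ZMod.count_map_natCast hS,
    ZMod.count_map_natCast hS]

instance (n : ℕ) : NeZero (6 * n + 3) := ⟨by omega⟩

def rosaDiffs (n : ℕ) (s : ℕ → ℕ) (i : ℕ) : Multiset (ZMod (6 * n + 3)) :=
  {(i : ZMod (6 * n + 3)), -(i : ZMod (6 * n + 3)),
    ((s i + n : ℕ) : ZMod (6 * n + 3)), -((s i + n : ℕ) : ZMod (6 * n + 3)),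
    ((s i + i + n : ℕ) : ZMod (6 * n + 3)), -((s i + i + n : ℕ) : ZMod (6 * n + 3))}

def rosaShortDiffs (n : ℕ) : Multiset (ZMod (6 * n + 3)) :=
  {((2 * n + 1 : ℕ) : ZMod (6 * n + 3)), -((2 * n + 1 : ℕ) : ZMod (6 * n + 3))}

def rosaAllDiffs (n : ℕ) (s : ℕ → ℕ) : Multiset (ZMod (6 * n + 3)) :=
  (Finset.Icc 1 n).val.bind (rosaDiffs n s) + rosaShortDiffs n

lemma rosaDiffs_le_rosaAllDiffs {n i : ℕ} (s : ℕ → ℕ) (hi : i ∈ Finset.Icc 1 n) :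
    rosaDiffs n s i ≤ rosaAllDiffs n s :=
  (Multiset.le_bind _ hi).trans (Multiset.le_add_right _ _)

lemma triangleDiffs_rosa (n : ℕ) (s : ℕ → ℕ) (i : ℕ) :
    CCS.triangleDiffs (i : ZMod (6 * n + 3)) ((s i + i + n : ℕ) : ZMod (6 * n + 3)) =
      rosaDiffs n s i := by
  have hsub :
      ((s i + i + n : ℕ) : ZMod (6 * n + 3)) - i = ((s i + n : ℕ) : ZMod (6 * n + 3)) := by
    push_cast
    ring
  rw [CCS.triangleDiffs, hsub]
  rfl

namespace IsSplitSkolem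

variable {n : ℕ} {s : ℕ → ℕ} {i : ℕ}

lemma count_rosaAllDiffs (hs : IsSplitSkolem n s) (x : ZMod (6 * n + 3)) :
    (rosaAllDiffs n s).count x = if x = 0 then 0 else 1 := by
  have hbind : rosaAllDiffs n s =
      ((Finset.Icc 1 n).val.bind (fun i => {i, s i + n, s i + i + n}) + {2 * n + 1}).bind
        fun y => {(y : ZMod (6 * n + 3)), -(y : ZMod (6 * n + 3))} := by
    rw [Multiset.add_bind, Multiset.bind_assoc, Multiset.singleton_bind]
    rfl
  have hgap := splitSkolemGap_bounds n
  rw [hbind, hs.bind_baseDiffs_eq, ZMod.count_bind_natCast_neg (fun y hy => by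
    simp only [Finset.mem_sdiff, Finset.mem_Icc] at hy; omega)]
  by_cases hx : x = 0
  · simp [hx]
  · have hpos : x.val ≠ 0 := (ZMod.val_ne_zero x).2 hx
    have hlt := x.val_lt
    rw [ZMod.neg_val, if_neg hx, if_neg hx]
    simp only [Finset.mem_sdiff, Finset.mem_Icc, Finset.mem_singleton]
    split_ifs <;> omega

lemma nodup_rosaAllDiffs (hs : IsSplitSkolem n s) : (rosaAllDiffs n s).Nodup :=
  Multiset.nodup_iff_count_le_one.2 fun x => by
    rw [hs.count_rosaAllDiffs]
    split_ifs <;> omega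

lemma zero_notMem_rosaAllDiffs (hs : IsSplitSkolem n s) : 0 ∉ rosaAllDiffs n s :=
  Multiset.count_eq_zero.1 (by rw [hs.count_rosaAllDiffs, if_pos rfl])

lemma nodup_rosaDiffs (hs : IsSplitSkolem n s) (hi : i ∈ Finset.Icc 1 n) :
    (rosaDiffs n s i).Nodup :=
  Multiset.nodup_of_le (rosaDiffs_le_rosaAllDiffs s hi) hs.nodup_rosaAllDiffs

lemma zero_notMem_rosaDiffs (hs : IsSplitSkolem n s) (hi : i ∈ Finset.Icc 1 n) :
    0 ∉ rosaDiffs n s i :=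
  fun h => hs.zero_notMem_rosaAllDiffs (Multiset.mem_of_le (rosaDiffs_le_rosaAllDiffs s hi) h)

lemma isCycleBlock_rosaCycle (hs : IsSplitSkolem n s) (hi : i ∈ Finset.Icc 1 n) :
    CCS.IsCycleBlock (6 * n + 3) 3 (rosaCycle n s i) :=
  CCS.isCycleBlock_edgesOf_zero (triangleDiffs_rosa n s i ▸ hs.zero_notMem_rosaDiffs hi)

lemma cycleType_rosaCycle (hs : IsSplitSkolem n s) (hi : i ∈ Finset.Icc 1 n) :
    CCS.cycleType (rosaCycle n s i) = 1 :=
  CCS.cycleType_edgesOf_zero (triangleDiffs_rosa n s i ▸ hs.zero_notMem_rosaDiffs hi)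
    (triangleDiffs_rosa n s i ▸ hs.nodup_rosaDiffs hi)

lemma partialDiffs_rosaCycle (hs : IsSplitSkolem n s) (hi : i ∈ Finset.Icc 1 n) :
    CCS.partialDiffs (rosaCycle n s i) = rosaDiffs n s i :=
  (CCS.partialDiffs_edgesOf_zero (triangleDiffs_rosa n s i ▸ hs.zero_notMem_rosaDiffs hi)
    (triangleDiffs_rosa n s i ▸ hs.nodup_rosaDiffs hi)).trans (triangleDiffs_rosa n s i)

end IsSplitSkolem

section RosaShortCycle

variable (n : ℕ)

lemma rosaShortCycle_eq :
    rosaShortCycle n = CCS.edgesOf ![0, ((2 * n + 1 : ℕ) : ZMod (6 * n + 3)),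
      ((2 * n + 1 : ℕ) : ZMod (6 * n + 3)) + ((2 * n + 1 : ℕ) : ZMod (6 * n + 3))] := by
  rw [rosaShortCycle, ← Nat.cast_add, show 2 * n + 1 + (2 * n + 1) = 4 * n + 2 by ring]

lemma natCast_two_mul_add_one_ne_zero : ((2 * n + 1 : ℕ) : ZMod (6 * n + 3)) ≠ 0 := by
  rw [← ZMod.val_ne_zero, ZMod.val_natCast_of_lt (by omega)]
  omega

lemma natCast_two_mul_add_one_add_add :
    ((2 * n + 1 : ℕ) : ZMod (6 * n + 3)) + ((2 * n + 1 : ℕ) : ZMod (6 * n + 3)) +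
      ((2 * n + 1 : ℕ) : ZMod (6 * n + 3)) = 0 := by
  rw [← Nat.cast_add, ← Nat.cast_add,
    show 2 * n + 1 + (2 * n + 1) + (2 * n + 1) = 6 * n + 3 by ring, ZMod.natCast_self]

lemma isCycleBlock_rosaShortCycle : CCS.IsCycleBlock (6 * n + 3) 3 (rosaShortCycle n) := by
  rw [rosaShortCycle_eq]
  exact CCS.isCycleBlock_edgesOf_zero (CCS.zero_notMem_triangleDiffs_orbit
    (natCast_two_mul_add_one_ne_zero n) (natCast_two_mul_add_one_add_add n))

lemma cycleType_rosaShortCycle : CCS.cycleType (rosaShortCycle n) = 3 := by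
  rw [rosaShortCycle_eq]
  exact CCS.cycleType_edgesOf_orbit (natCast_two_mul_add_one_ne_zero n)
    (natCast_two_mul_add_one_add_add n)

lemma partialDiffs_rosaShortCycle : CCS.partialDiffs (rosaShortCycle n) = rosaShortDiffs n := by
  rw [rosaShortCycle_eq]
  exact CCS.partialDiffs_edgesOf_orbit (natCast_two_mul_add_one_ne_zero n)
    (natCast_two_mul_add_one_add_add n)

end RosaShortCycle

/- The `Finset` union merges none of the cycles: their partial differences are nonempty and sit
disjointly inside the duplicate-free `rosaAllDiffs n s`. -/
lemma IsSplitSkolem.bind_partialDiffs {n : ℕ} {s : ℕ → ℕ} (hs : IsSplitSkolem n s) :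
    ((Finset.Icc 1 n).image (rosaCycle n s) ∪ {rosaShortCycle n}).val.bind CCS.partialDiffs =
      rosaAllDiffs n s := by
  set m := (Finset.Icc 1 n).val.map (rosaCycle n s) + {rosaShortCycle n}
  have hm : m.bind CCS.partialDiffs = rosaAllDiffs n s := by
    rw [Multiset.add_bind, Multiset.bind_map, Multiset.singleton_bind, partialDiffs_rosaShortCycle,
      Multiset.bind_congr fun i hi => hs.partialDiffs_rosaCycle hi]
    rfl
  have hm0 : ∀ E ∈ m, CCS.partialDiffs E ≠ 0 := by
    intro E hE
    simp only [m, Multiset.mem_add, Multiset.mem_map, Finset.mem_val, Multiset.mem_singleton] at hE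
    rcases hE with ⟨i, hi, rfl⟩ | rfl
    · simp [hs.partialDiffs_rosaCycle hi, rosaDiffs]
    · simp [partialDiffs_rosaShortCycle, rosaShortDiffs]
  have hFm : (Finset.Icc 1 n).image (rosaCycle n s) ∪ {rosaShortCycle n} = m.toFinset := by
    ext E
    simp [m]
  rw [hFm, Multiset.toFinset_val_bind (by rw [hm]; exact hs.nodup_rosaAllDiffs) hm0, hm]

theorem stmt3_general (n : ℕ) (s : ℕ → ℕ) (hs : IsSplitSkolem n s) :
    CCS.IsDifferenceSystem (6 * n + 3) 3
      ((Finset.Icc 1 n).image (rosaCycle n s) ∪ {rosaShortCycle n}) ∧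
    (∀ x : ZMod (6 * n + 3),
      Multiset.count x
        (((Finset.Icc 1 n).val.bind fun i =>
            ({(i : ZMod (6 * n + 3)), -(i : ZMod (6 * n + 3)),
              ((s i + n : ℕ) : ZMod (6 * n + 3)), -((s i + n : ℕ) : ZMod (6 * n + 3)),
              ((s i + i + n : ℕ) : ZMod (6 * n + 3)),
              -((s i + i + n : ℕ) : ZMod (6 * n + 3))} : Multiset (ZMod (6 * n + 3)))) +
          {((2 * n + 1 : ℕ) : ZMod (6 * n + 3)), -((2 * n + 1 : ℕ) : ZMod (6 * n + 3))}) =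
        if x = 0 then 0 else 1) ∧
    (∀ i ∈ Finset.Icc 1 n, CCS.cycleType (rosaCycle n s i) = 1) ∧
    CCS.cycleType (rosaShortCycle n) = 3 := by
  refine ⟨⟨fun E hE => ?_, fun x => hs.bind_partialDiffs ▸ hs.count_rosaAllDiffs x⟩,
    hs.count_rosaAllDiffs, fun i hi => hs.cycleType_rosaCycle hi, cycleType_rosaShortCycle n⟩
  rw [Finset.mem_union, Finset.mem_image, Finset.mem_singleton] at hE
  rcases hE with ⟨i, hi, rfl⟩ | rfl
  · exact hs.isCycleBlock_rosaCycle hi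
  · exact isCycleBlock_rosaShortCycle n

/-- For a split Skolem sequence `(s_1, …, s_n)` of order `n ≥ 2`, the set
`F = {C_1, …, C_n} ∪ {B}` with `C_i = (0, i, s_i + i + n)` and `B = (0, 2n+1, 4n+2)` is a
`(K_{6n+3}, C_3)`-difference system: the multiset
`{±i, ±(s_i+n), ±(s_i+i+n) : 1 ≤ i ≤ n} ∪ {±(2n+1)}` covers every nonzero element of
`ZMod (6n+3)` exactly once. Moreover each `C_i` is of type 1 and `B` is of type 3. -/
theorem stmt3 (n : ℕ) (hn : 2 ≤ n) (s : ℕ → ℕ) (hs : IsSplitSkolem n s) :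
    CCS.IsDifferenceSystem (6 * n + 3) 3
      ((Finset.Icc 1 n).image (rosaCycle n s) ∪ {rosaShortCycle n}) ∧
    (∀ x : ZMod (6 * n + 3),
      Multiset.count x
        (((Finset.Icc 1 n).val.bind fun i =>
            ({(i : ZMod (6 * n + 3)), -(i : ZMod (6 * n + 3)),
              ((s i + n : ℕ) : ZMod (6 * n + 3)), -((s i + n : ℕ) : ZMod (6 * n + 3)),
              ((s i + i + n : ℕ) : ZMod (6 * n + 3)),
              -((s i + i + n : ℕ) : ZMod (6 * n + 3))} : Multiset (ZMod (6 * n + 3)))) +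
          {((2 * n + 1 : ℕ) : ZMod (6 * n + 3)), -((2 * n + 1 : ℕ) : ZMod (6 * n + 3))}) =
        if x = 0 then 0 else 1) ∧
    (∀ i ∈ Finset.Icc 1 n, CCS.cycleType (rosaCycle n s i) = 1) ∧
    CCS.cycleType (rosaShortCycle n) = 3 :=
  stmt3_general n s hs
end

section
/- Let v ≥ 3 be odd and let C = (0, a_1, a_2, a_3, a_4) be a 5-cycle of type 1 on ZMod v with consecutive differences d_i = a_i − a_{i−1} (a_0 = a_5 = 0), so that the 10 elements ±d_1, …, ±d_5 are pairwise distinct in ZMod v. Then for every permutation σ of {1,…,5}, the five partial sums 0, d_{σ(1)}, d_{σ(1)}+d_{σ(2)}, d_{σ(1)}+d_{σ(2)}+d_{σ(3)}, d_{σ(1)}+d_{σ(2)}+d_{σ(3)}+d_{σ(4)} are pairwise distinct, so that C_σ := (0, d_{σ(1)}, d_{σ(1)}+d_{σ(2)}, d_{σ(1)}+d_{σ(2)}+d_{σ(3)}, d_{σ(1)}+d_{σ(2)}+d_{σ(3)}+d_{σ(4)}) is again a 5-cycle, it is of type 1, and ∂C_σ = ∂C. -/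
/-- The partial sums `0, d_1, d_1+d_2, d_1+d_2+d_3, d_1+d_2+d_3+d_4` of a difference
sequence `d : Fin 5 → ZMod v`: the vertex tuple of the associated 5-cycle. -/
def psum {v : ℕ} (d : Fin 5 → ZMod v) (j : Fin 5) : ZMod v :=
  ∑ i ∈ Finset.univ.filter (fun i : Fin 5 => (i : ℕ) < (j : ℕ)), d i

def SignedInjective {ι G : Type*} [Neg G] (δ : ι → G) : Prop :=
  Function.Injective fun p : ι × Bool => cond p.2 (δ p.1) (-δ p.1)

namespace SignedInjective

variable {ι κ G : Type*} [AddGroup G] {δ : ι → G}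

theorem injective (hδ : SignedInjective δ) : Function.Injective δ := fun i j h => by
  simpa using @hδ (i, true) (j, true) h

theorem ne_neg (hδ : SignedInjective δ) (i j : ι) : δ i ≠ -δ j := fun h => by
  simpa using @hδ (i, true) (j, false) h

theorem ne_zero (hδ : SignedInjective δ) (i : ι) : δ i ≠ 0 := fun h =>
  hδ.ne_neg i i (by rw [h, neg_zero])

theorem add_ne_zero (hδ : SignedInjective δ) (i j : ι) : δ i + δ j ≠ 0 := fun h =>
  hδ.ne_neg i j (eq_neg_of_add_eq_zero_left h)

theorem comp (hδ : SignedInjective δ) {f : κ → ι} (hf : Function.Injective f) :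
    SignedInjective (δ ∘ f) :=
  Function.Injective.comp hδ (hf.prodMap Function.injective_id)

end SignedInjective

section SubsetSums

open Finset

variable {ι G : Type*} [AddCommGroup G] {δ : ι → G}

theorem SignedInjective.sum_ne_zero_of_card_le_two (hδ : SignedInjective δ) {S : Finset ι}
    (hS : S.Nonempty) (hcard : #S ≤ 2) : ∑ i ∈ S, δ i ≠ 0 := by
  classical
  obtain hone | htwo : #S = 1 ∨ #S = 2 := by have := hS.card_pos; omega
  · obtain ⟨i, rfl⟩ := card_eq_one.mp hone
    simpa using hδ.ne_zero i
  · obtain ⟨i, j, hij, rfl⟩ := card_eq_two.mp htwo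
    simpa [sum_pair hij] using hδ.add_ne_zero i j

theorem SignedInjective.sum_ne_zero_of_ne_univ [Fintype ι] (hι : Fintype.card ι ≤ 5)
    (hδ : SignedInjective δ) (hsum : ∑ i, δ i = 0) {S : Finset ι} (hS : S.Nonempty)
    (hSu : S ≠ univ) : ∑ i ∈ S, δ i ≠ 0 := by
  classical
  by_cases hcard : #S ≤ 2
  · exact hδ.sum_ne_zero_of_card_le_two hS hcard
  have hcompl : ∑ i ∈ Sᶜ, δ i ≠ 0 :=
    hδ.sum_ne_zero_of_card_le_two (nonempty_iff_ne_empty.mpr (by rwa [Ne, compl_eq_empty_iff]))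
      (by rw [card_compl]; omega)
  intro h
  rw [← sum_add_sum_compl S, h, zero_add] at hsum
  exact hcompl hsum

end SubsetSums

section PartialSums

variable {v : ℕ} {e : Fin 5 → ZMod v}

theorem psum_add_one (hsum : ∑ i, e i = 0) (j : Fin 5) : psum e (j + 1) = psum e j + e j := by
  rw [Fin.sum_univ_five] at hsum
  fin_cases j <;> simp [psum, Finset.sum_filter, Fin.sum_univ_five, hsum]

theorem psum_ne_psum_of_lt (hδ : SignedInjective e) (hsum : ∑ i, e i = 0) {a b : Fin 5}
    (hab : a < b) : psum e a ≠ psum e b := by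
  set below : Fin 5 → Finset (Fin 5) := fun j => Finset.univ.filter fun i => (i : ℕ) < j
  have hsub : below a ⊆ below b := fun i hi => by
    simp only [below, Finset.mem_filter, Finset.mem_univ, true_and] at hi ⊢
    omega
  have hne : (below b \ below a).Nonempty := ⟨a, by simp [below, hab]⟩
  have hnu : below b \ below a ≠ Finset.univ := fun h => by
    have hb : b ∈ below b \ below a := by rw [h]; exact Finset.mem_univ b
    simp [below] at hb
  intro h
  have hsdiff := Finset.sum_sdiff hsub (f := e)
  change _ + psum e a = psum e b at hsdiff
  rw [← h, add_eq_right] at hsdiff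
  exact hδ.sum_ne_zero_of_ne_univ (by simp) hsum hne hnu hsdiff

theorem psum_injective (hδ : SignedInjective e) (hsum : ∑ i, e i = 0) :
    Function.Injective (psum e) := by
  intro a b h
  rcases lt_trichotomy a b with hab | rfl | hba
  · exact absurd h (psum_ne_psum_of_lt hδ hsum hab)
  · rfl
  · exact absurd h.symm (psum_ne_psum_of_lt hδ hsum hba)

end PartialSums

namespace CCS

variable {v k : ℕ} [NeZero k] {c : Fin k → ZMod v}

theorem edgesOf_eq_image (c : Fin k → ZMod v) :
    edgesOf c = Finset.univ.image fun i => s(c i, c (i + 1)) := by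
  unfold edgesOf
  congr! with i
  simp [Fin.val_add, Nat.add_mod]

theorem injective_edge (hc : Function.Injective c)
    (hδ : SignedInjective fun i => c (i + 1) - c i) :
    Function.Injective fun i => s(c i, c (i + 1)) := by
  intro i j h
  rcases Sym2.eq_iff.mp h with ⟨hij, -⟩ | ⟨hij, hji⟩
  · exact hc hij
  · exact absurd (by rw [hij, hji, neg_sub]) (hδ.ne_neg i j)

theorem fullDiffs_edgesOf (hc : Function.Injective c)
    (hδ : SignedInjective fun i => c (i + 1) - c i) :
    fullDiffs (edgesOf c) = ∑ i, {c i - c (i + 1), c (i + 1) - c i} := by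
  rw [fullDiffs, edgesOf_eq_image, Finset.image_val_of_injOn (injective_edge hc hδ).injOn,
    Multiset.bind_map]
  rfl

theorem eq_zero_of_translateBlock_edgesOf_eq (hδ : SignedInjective fun i => c (i + 1) - c i)
    {z : ZMod v} (hz : translateBlock (edgesOf c) z = edgesOf c) : z = 0 := by
  have h0 : s(c 0 + z, c (0 + 1) + z) ∈ edgesOf c := by
    rw [← hz, translateBlock, edgesOf_eq_image, Finset.image_image]
    exact Finset.mem_image_of_mem _ (Finset.mem_univ 0)
  rw [edgesOf_eq_image] at h0
  obtain ⟨i, -, hi⟩ := Finset.mem_image.mp h0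
  rcases Sym2.eq_iff.mp hi with ⟨h1, h2⟩ | ⟨h1, h2⟩
  · obtain rfl : i = 0 := hδ.injective (show c (i + 1) - c i = c (0 + 1) - c 0 by
      rw [h1, h2, add_sub_add_right_eq_sub])
    simpa using h1.symm
  · exact absurd (show c (i + 1) - c i = -(c (0 + 1) - c 0) by rw [h1, h2]; abel)
      (hδ.ne_neg i 0)

theorem cycleType_edgesOf_eq_one (hδ : SignedInjective fun i => c (i + 1) - c i) :
    cycleType (edgesOf c) = 1 := by
  rw [cycleType, Nat.card_eq_one_iff_unique]
  refine ⟨⟨fun a b => Subtype.ext ?_⟩, ⟨⟨0, ?_⟩⟩⟩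
  · rw [eq_zero_of_translateBlock_edgesOf_eq hδ a.2, eq_zero_of_translateBlock_edgesOf_eq hδ b.2]
  · simp [translateBlock]

theorem partialDiffs_of_cycleType_eq_one {E : Block v} (h : cycleType E = 1) :
    partialDiffs E = fullDiffs E := by
  conv_rhs => rw [← Multiset.toFinset_sum_count_nsmul_eq (fullDiffs E)]
  simp only [partialDiffs, h, Nat.div_one, Multiset.nsmul_singleton]
  rfl

end CCS

section PartialSumCycle

open CCS

variable {v : ℕ} {e : Fin 5 → ZMod v}

theorem psum_add_one_sub (hsum : ∑ i, e i = 0) : (fun i => psum e (i + 1) - psum e i) = e :=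
  funext fun i => by rw [psum_add_one hsum, add_sub_cancel_left]

theorem cycleType_edgesOf_psum (hδ : SignedInjective e) (hsum : ∑ i, e i = 0) :
    cycleType (edgesOf (psum e)) = 1 :=
  cycleType_edgesOf_eq_one (by rwa [psum_add_one_sub hsum])

theorem partialDiffs_edgesOf_psum (hδ : SignedInjective e) (hsum : ∑ i, e i = 0) :
    partialDiffs (edgesOf (psum e)) = ∑ i, {-e i, e i} := by
  rw [partialDiffs_of_cycleType_eq_one (cycleType_edgesOf_psum hδ hsum),
    fullDiffs_edgesOf (psum_injective hδ hsum) (by rwa [psum_add_one_sub hsum])]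
  simp [psum_add_one hsum]

end PartialSumCycle

theorem stmt7_general (v : ℕ) (d : Fin 5 → ZMod v)
    (hsum : ∑ i, d i = 0)
    (hdiff : Function.Injective fun p : Fin 5 × Bool => cond p.2 (d p.1) (-d p.1)) :
    ∀ σ : Equiv.Perm (Fin 5),
      Function.Injective (psum (d ∘ σ)) ∧
      CCS.IsCycleBlock v 5 (CCS.edgesOf (psum (d ∘ σ))) ∧
      CCS.cycleType (CCS.edgesOf (psum (d ∘ σ))) = 1 ∧
      CCS.partialDiffs (CCS.edgesOf (psum (d ∘ σ))) =
        CCS.partialDiffs (CCS.edgesOf (psum d)) := by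
  intro σ
  have hdiffσ : SignedInjective (d ∘ σ) := SignedInjective.comp hdiff σ.injective
  have hsumσ : ∑ i, (d ∘ σ) i = 0 := by rw [← hsum]; exact Equiv.sum_comp σ d
  have hinjσ := psum_injective hdiffσ hsumσ
  refine ⟨hinjσ, ⟨_, hinjσ, rfl⟩, cycleType_edgesOf_psum hdiffσ hsumσ, ?_⟩
  rw [partialDiffs_edgesOf_psum hdiffσ hsumσ, partialDiffs_edgesOf_psum hdiff hsum]
  exact Equiv.sum_comp σ fun i => {-d i, d i}

/-- Let `C` be a 5-cycle of type 1 with consecutive differences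
`d_1, …, d_5` (summing to `0`) such that the ten elements `±d_1, …, ±d_5` are pairwise
distinct. Then for every permutation `σ` of the indices, the five partial sums of
`(d_{σ(1)}, …, d_{σ(5)})` are pairwise distinct, so they form a 5-cycle `C_σ`, which is
again of type 1 and satisfies `∂C_σ = ∂C`. -/
theorem stmt7 (v : ℕ) (hv : 3 ≤ v) (hvodd : Odd v) (d : Fin 5 → ZMod v)
    (hsum : ∑ i, d i = 0)
    (hCinj : Function.Injective (psum d))
    (htype : CCS.cycleType (CCS.edgesOf (psum d)) = 1)
    (hdiff : Function.Injective fun p : Fin 5 × Bool => cond p.2 (d p.1) (-d p.1)) :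
    ∀ σ : Equiv.Perm (Fin 5),
      Function.Injective (psum (d ∘ σ)) ∧
      CCS.IsCycleBlock v 5 (CCS.edgesOf (psum (d ∘ σ))) ∧
      CCS.cycleType (CCS.edgesOf (psum (d ∘ σ))) = 1 ∧
      CCS.partialDiffs (CCS.edgesOf (psum (d ∘ σ))) =
        CCS.partialDiffs (CCS.edgesOf (psum d)) :=
  stmt7_general v d hsum hdiff
end
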